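/- arXiv:2211.11117 — 4 statements merged into one kernel-verified Lean document; each statement's English description precedes it below -/
import Mathlib

section
/- The sets \overline{ab} and \overline{oa} ∩ \overline{ob} are disjoint (up to lines passing through an endpoint of the segments), and their union equals \overline{oa} ∪ \overline{ob}: a line not passing through the points o, a, b intersects segment [a,b] if and only if it intersects exactly one of the segments [o,a], [o,b]; and it intersects both [o,a] and [o,b] if and only if it intersects both but not [a,b]. -/
/-!
A line `(x, v)` is the zero set of the affine height function `q ↦ q.2 - v q.1 - x`, so it meets
`[u, w]` iff the heights of `u` and `w` differ in sign (when neither vanishes). With the signs of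
the heights of `o`, `a`, `b` as three propositions, every claim is a propositional tautology.
-/

/-- The (non-vertical) line in time-space ℝ² parametrized by `(x, v)`:
the set `{(t, x + v t) : t ∈ ℝ}`. -/
def lineSet (p : ℝ × ℝ) : Set (ℝ × ℝ) := {q | ∃ t : ℝ, q = (t, p.1 + p.2 * t)}

/-- The set of line parameters `(x, v)` whose line intersects the segment `[a, b] ⊆ ℝ²`. -/
def crosses (a b : ℝ × ℝ) : Set (ℝ × ℝ) := {p | (lineSet p ∩ segment ℝ a b).Nonempty}

open Set

theorem AffineMap.preimage_zero_inter_segment_nonempty_iff {E : Type*} [AddCommGroup E]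
    [Module ℝ E] (f : E →ᵃ[ℝ] ℝ) (u w : E) :
    (f ⁻¹' {0} ∩ segment ℝ u w).Nonempty ↔ (0 : ℝ) ∈ segment ℝ (f u) (f w) := by
  rw [← image_segment ℝ f]
  constructor
  · rintro ⟨q, hq, hqs⟩
    exact ⟨q, hqs, hq⟩
  · rintro ⟨q, hqs, hq⟩
    exact ⟨q, hq, hqs⟩

theorem zero_mem_segment_iff_xor_pos {x y : ℝ} (hx : x ≠ 0) (hy : y ≠ 0) :
    (0 : ℝ) ∈ segment ℝ x y ↔ Xor (0 < x) (0 < y) := by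
  rw [segment_eq_uIcc, mem_uIcc]
  rcases hx.lt_or_gt with hx | hx <;> rcases hy.lt_or_gt with hy | hy <;>
    simp only [xor_def] <;> grind

def lineHeight (p : ℝ × ℝ) : ℝ × ℝ →ᵃ[ℝ] ℝ :=
  (LinearMap.snd ℝ ℝ ℝ - p.2 • LinearMap.fst ℝ ℝ ℝ).toAffineMap - AffineMap.const ℝ (ℝ × ℝ) p.1

@[simp]
theorem lineHeight_apply (p q : ℝ × ℝ) : lineHeight p q = q.2 - p.2 * q.1 - p.1 := by
  simp [lineHeight]

theorem lineSet_eq_preimage_lineHeight (p : ℝ × ℝ) : lineSet p = lineHeight p ⁻¹' {0} := by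
  ext ⟨t, y⟩
  simp only [lineSet, mem_ofPred_eq, Prod.mk.injEq, mem_preimage, lineHeight_apply,
    mem_singleton_iff]
  constructor
  · rintro ⟨t, rfl, rfl⟩
    ring
  · intro h
    exact ⟨t, rfl, by linarith⟩

theorem mem_crosses_iff {p u w : ℝ × ℝ} (hu : u ∉ lineSet p) (hw : w ∉ lineSet p) :
    p ∈ crosses u w ↔ Xor (0 < lineHeight p u) (0 < lineHeight p w) := by
  rw [lineSet_eq_preimage_lineHeight] at hu hw
  rw [crosses, mem_ofPred_eq, lineSet_eq_preimage_lineHeight,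
    AffineMap.preimage_zero_inter_segment_nonempty_iff, zero_mem_segment_iff_xor_pos hu hw]

/-- A line not passing through the points `o`, `a`, `b` intersects the segment `[a,b]` if and
only if it intersects exactly one of the segments `[o,a]`, `[o,b]`; and it intersects both
`[o,a]` and `[o,b]` if and only if it intersects both but not `[a,b]`.  In particular the sets
`\overline{ab}` and `\overline{oa} ∩ \overline{ob}` are disjoint and their union is
`\overline{oa} ∪ \overline{ob}` (always restricted to lines avoiding the three vertices). -/
theorem stmt1 (a b : ℝ × ℝ) (p : ℝ × ℝ)
    (h0 : (0 : ℝ × ℝ) ∉ lineSet p) (ha : a ∉ lineSet p) (hb : b ∉ lineSet p) :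
    (p ∈ crosses a b ↔ Xor' (p ∈ crosses 0 a) (p ∈ crosses 0 b)) ∧
    (p ∈ crosses 0 a ∩ crosses 0 b ↔
      p ∈ crosses 0 a ∧ p ∈ crosses 0 b ∧ p ∉ crosses a b) ∧
    (p ∈ crosses a b ∪ (crosses 0 a ∩ crosses 0 b) ↔ p ∈ crosses 0 a ∪ crosses 0 b) ∧
    ¬ (p ∈ crosses a b ∧ p ∈ crosses 0 a ∩ crosses 0 b) := by
  simp only [mem_inter_iff, mem_union, mem_crosses_iff ha hb, mem_crosses_iff h0 ha,
    mem_crosses_iff h0 hb, Xor', xor_def]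
  tauto
end

section
/- Let f ∈ 𝓕 and define the dilated density g := 𝒟_q f by g(y,v,r) = f(D_{f,q}^{-1}(y),v,r)/(1+σ_f(D_{f,q}^{-1}(y))). Then the mass function of g satisfies σ_g(y) = σ_f(x)/(1+σ_f(x)) with x = D_{f,q}^{-1}(y); in particular ‖σ_g‖_∞ < 1, i.e. g ∈ 𝓖. -/
open MeasureTheory Filter Topology

/-- The mass function `σ_f(x) = ∬ r f(x,v,r) dv dr` of a density `f` on position–velocity–length
space (written in curried form `f x v r`). -/
noncomputable def sigmaF (f : ℝ → ℝ → ℝ → ℝ) (x : ℝ) : ℝ :=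
  ∫ p : ℝ × ℝ, p.2 * f x p.1 p.2

/-- The class `𝓛` of dominating profiles: nonnegative `γ(v,r)` with
`∬ (v² + r² + 1) γ(v,r) dv dr < ∞`. -/
def MemL (γ : ℝ → ℝ → ℝ) : Prop :=
  (∀ v r : ℝ, 0 ≤ γ v r) ∧
  Integrable (fun p : ℝ × ℝ => (p.1 ^ 2 + p.2 ^ 2 + 1) * γ p.1 p.2)

/-- The class `𝓕_γ`: nonnegative measurable densities `f(x,v,r)`, `C¹` in `x`, with `f` and
`∂ₓ f` dominated by `γ(v,r)`. -/
def MemFgamma (f : ℝ → ℝ → ℝ → ℝ) (γ : ℝ → ℝ → ℝ) : Prop :=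
  Measurable (fun p : ℝ × ℝ × ℝ => f p.1 p.2.1 p.2.2) ∧
  (∀ x v r : ℝ, 0 ≤ f x v r) ∧
  (∀ v r : ℝ, ContDiff ℝ 1 fun x => f x v r) ∧
  (∀ x v r : ℝ, f x v r ≤ γ v r) ∧
  (∀ x v r : ℝ, |deriv (fun x' => f x' v r) x| ≤ γ v r)

/-- The class `𝓕` of admissible densities: `f ∈ 𝓕_γ` for some `γ ∈ 𝓛`, with everywhere
positive mass function `σ_f`. -/
def MemF (f : ℝ → ℝ → ℝ → ℝ) : Prop :=
  (∃ γ, MemL γ ∧ MemFgamma f γ) ∧ ∀ x : ℝ, 0 < sigmaF f x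

/-- The class `𝓖` of dilated densities: `g ∈ 𝓕` with `‖σ_g‖_∞ < 1`. -/
def MemG (g : ℝ → ℝ → ℝ → ℝ) : Prop :=
  MemF g ∧ ∃ c : ℝ, c < 1 ∧ ∀ x : ℝ, sigmaF g x ≤ c

/-- The dilation function `D_{f,a}(b) = b + ∫_a^b σ_f(x) dx`. -/
noncomputable def Dfun (f : ℝ → ℝ → ℝ → ℝ) (a b : ℝ) : ℝ :=
  b + ∫ x in a..b, sigmaF f x

/-- The contraction function `C_{g,a}(b) = b - ∫_a^b σ_g(y) dy`. -/
noncomputable def Cfun (g : ℝ → ℝ → ℝ → ℝ) (a b : ℝ) : ℝ :=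
  b - ∫ x in a..b, sigmaF g x

/-- The dilation operator `𝒟_q f (y,v,r) = f(D_{f,q}⁻¹(y),v,r) / (1 + σ_f(D_{f,q}⁻¹(y)))`. -/
noncomputable def Dop (f : ℝ → ℝ → ℝ → ℝ) (q : ℝ) : ℝ → ℝ → ℝ → ℝ :=
  fun y v r =>
    f (Function.invFun (Dfun f q) y) v r / (1 + sigmaF f (Function.invFun (Dfun f q) y))

/-- The contraction operator `𝒞_q g (x,v,r) = g(C_{g,q}⁻¹(x),v,r) / (1 - σ_g(C_{g,q}⁻¹(x)))`. -/
noncomputable def Cop (g : ℝ → ℝ → ℝ → ℝ) (q : ℝ) : ℝ → ℝ → ℝ → ℝ :=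
  fun x v r =>
    g (Function.invFun (Cfun g q) x) v r / (1 - sigmaF g (Function.invFun (Cfun g q) x))

/-- The spatial shift operator `S_c h (x,v,r) = h(x - c, v, r)`. -/
def Sop (c : ℝ) (h : ℝ → ℝ → ℝ → ℝ) : ℝ → ℝ → ℝ → ℝ := fun x v r => h (x - c) v r

/-- The free (ideal gas) evolution `𝒯_t f (x,v,r) = f(x - v t, v, r)`. -/
def Tfree (t : ℝ) (f : ℝ → ℝ → ℝ → ℝ) : ℝ → ℝ → ℝ → ℝ := fun x v r => f (x - v * t) v r

/-- The mass flow `j_f⁺(x,v,t) = ∫_{w<v} ∫_x^{x+(v-w)t} ∫ r f(z,w,r) dr dz dw`: the mass with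
speed less than `v` crossing the trajectory `s ↦ x + v s` during `[0,t]`. -/
noncomputable def jplus (f : ℝ → ℝ → ℝ → ℝ) (x v t : ℝ) : ℝ :=
  ∫ w in Set.Iio v, (∫ z in x..(x + (v - w) * t), (∫ r : ℝ, r * f z w r))

/-- The mass flow `j_f⁻(x,v,t) = ∫_{w>v} ∫_{x+(v-w)t}^x ∫ r f(z,w,r) dr dz dw`: the mass with
speed greater than `v` crossing the trajectory `s ↦ x + v s` during `[0,t]`. -/
noncomputable def jminus (f : ℝ → ℝ → ℝ → ℝ) (x v t : ℝ) : ℝ :=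
  ∫ w in Set.Ioi v, (∫ z in (x + (v - w) * t)..x, (∫ r : ℝ, r * f z w r))

/-- The net mass flow `j_f = j_f⁺ - j_f⁻`. -/
noncomputable def jflow (f : ℝ → ℝ → ℝ → ℝ) (x v t : ℝ) : ℝ := jplus f x v t - jminus f x v t

/-- The macroscopic quasiparticle position `u_{g,v,t}(q) = q + v t + j_{𝒞_q g}(q,v,t)`. -/
noncomputable def uqp (g : ℝ → ℝ → ℝ → ℝ) (v t q : ℝ) : ℝ :=
  q + v * t + jflow (Cop g q) q v t

/-- The hard-rod evolution operator `𝒰_t g = S_{o_t} 𝒟_0 𝒯_t 𝒞_0 g` with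
`o_t = j_{𝒞_0 g}(0,0,t)`. -/
noncomputable def Uop (t : ℝ) (g : ℝ → ℝ → ℝ → ℝ) : ℝ → ℝ → ℝ → ℝ :=
  Sop (jflow (Cop g 0) 0 0 t) (Dop (Tfree t (Cop g 0)) 0)

/-!
Dividing `f(x,·,·)` by `1 + σ_f(x)` divides the mass function by the same factor, so
`σ_g = σ_f / (1 + σ_f)` at `x = D⁻¹(y)`; since `σ_f ≤ K := ∬ |r| γ` for the dominating profile
`γ`, this is at most `K / (1 + K) < 1`. What remains is `g ∈ 𝓕`: differentiating under the
integral sign, `σ_f` is `C¹` with `|σ_f'| ≤ K`, so `D_{f,q}` is a `C¹` increasing bijection with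
derivative `1 + σ_f ≥ 1`, and the quotient rule bounds `∂_y g` by `(1 + K) γ`.
-/

noncomputable def absMoment (γ : ℝ → ℝ → ℝ) : ℝ :=
  ∫ p : ℝ × ℝ, |p.2| * γ p.1 p.2

noncomputable def sigmaDeriv (f : ℝ → ℝ → ℝ → ℝ) (x : ℝ) : ℝ :=
  ∫ p : ℝ × ℝ, p.2 * deriv (fun x' => f x' p.1 p.2) x

theorem measurable_deriv_of_differentiableAt {α : Type*} [MeasurableSpace α] {F : α → ℝ → ℝ}
    {z : ℝ} (hm : ∀ x, Measurable fun a => F a x) (hd : ∀ a, DifferentiableAt ℝ (F a) z) :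
    Measurable fun a => deriv (F a) z := by
  have hh : Tendsto (fun n : ℕ => z + 1 / ((n : ℝ) + 1)) atTop (𝓝[≠] z) := by
    refine tendsto_nhdsWithin_iff.mpr ⟨?_, Eventually.of_forall fun n => ?_⟩
    · simpa using (tendsto_one_div_add_atTop_nhds_zero_nat (𝕜 := ℝ)).const_add z
    · have : (0 : ℝ) < 1 / ((n : ℝ) + 1) := by positivity
      simp only [Set.mem_compl_iff, Set.mem_singleton_iff]
      linarith
  refine measurable_of_tendsto_metrizable
    (f := fun n a => slope (F a) z (z + 1 / ((n : ℝ) + 1)))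
    (fun n => ?_) (tendsto_pi_nhds.mpr fun a => ?_)
  · simp only [slope_def_field, add_sub_cancel_left]
    exact ((hm _).sub (hm z)).div_const _
  · exact (hasDerivAt_iff_tendsto_slope.mp (hd a).hasDerivAt).comp hh

namespace MemL

variable {γ : ℝ → ℝ → ℝ}

theorem nonneg (hγ : MemL γ) (v r : ℝ) : 0 ≤ γ v r := hγ.1 v r

theorem aestronglyMeasurable (hγ : MemL γ) :
    AEStronglyMeasurable (fun p : ℝ × ℝ => γ p.1 p.2) := by
  have hw : Measurable fun p : ℝ × ℝ => (p.1 ^ 2 + p.2 ^ 2 + 1 : ℝ)⁻¹ := by fun_prop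
  refine (hγ.2.aestronglyMeasurable.mul hw.aestronglyMeasurable).congr
    (Eventually.of_forall fun p => ?_)
  have : p.1 ^ 2 + p.2 ^ 2 + 1 ≠ 0 := by positivity
  simp only [Pi.mul_apply]
  field_simp

theorem integrable_abs_mul (hγ : MemL γ) :
    Integrable fun p : ℝ × ℝ => |p.2| * γ p.1 p.2 := by
  refine hγ.2.mono' ((measurable_snd.abs.aestronglyMeasurable).mul hγ.aestronglyMeasurable)
    (Eventually.of_forall fun p => ?_)
  have hr : |p.2| ≤ p.1 ^ 2 + p.2 ^ 2 + 1 := by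
    nlinarith [sq_nonneg (|p.2| - 1), sq_abs p.2, sq_nonneg p.1]
  rw [Real.norm_of_nonneg (mul_nonneg (abs_nonneg _) (hγ.nonneg p.1 p.2))]
  exact mul_le_mul_of_nonneg_right hr (hγ.nonneg p.1 p.2)

theorem absMoment_nonneg (hγ : MemL γ) : 0 ≤ absMoment γ :=
  integral_nonneg fun p => mul_nonneg (abs_nonneg _) (hγ.nonneg p.1 p.2)

theorem const_mul (hγ : MemL γ) {c : ℝ} (hc : 0 ≤ c) : MemL fun v r => c * γ v r := by
  refine ⟨fun v r => mul_nonneg hc (hγ.nonneg v r), ?_⟩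
  simpa only [mul_left_comm] using hγ.2.const_mul c

end MemL

namespace MemFgamma

variable {f : ℝ → ℝ → ℝ → ℝ} {γ : ℝ → ℝ → ℝ}

theorem nonneg (hf : MemFgamma f γ) (x v r : ℝ) : 0 ≤ f x v r := hf.2.1 x v r

theorem contDiff (hf : MemFgamma f γ) (v r : ℝ) : ContDiff ℝ 1 fun x => f x v r := hf.2.2.1 v r

theorem le (hf : MemFgamma f γ) (x v r : ℝ) : f x v r ≤ γ v r := hf.2.2.2.1 x v r

theorem abs_deriv_le (hf : MemFgamma f γ) (x v r : ℝ) :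
    |deriv (fun x' => f x' v r) x| ≤ γ v r :=
  hf.2.2.2.2 x v r

theorem measurable_slice (hf : MemFgamma f γ) (z : ℝ) :
    Measurable fun p : ℝ × ℝ => f z p.1 p.2 :=
  hf.1.comp (measurable_const.prodMk measurable_id)

theorem hasDerivAt (hf : MemFgamma f γ) (v r z : ℝ) :
    HasDerivAt (fun x => f x v r) (deriv (fun x => f x v r) z) z :=
  ((hf.contDiff v r).differentiable one_ne_zero z).hasDerivAt

theorem norm_mul_le (hf : MemFgamma f γ) (z : ℝ) (p : ℝ × ℝ) :
    ‖p.2 * f z p.1 p.2‖ ≤ |p.2| * γ p.1 p.2 := by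
  rw [Real.norm_eq_abs, abs_mul, abs_of_nonneg (hf.nonneg _ _ _)]
  exact mul_le_mul_of_nonneg_left (hf.le _ _ _) (abs_nonneg _)

theorem norm_mul_deriv_le (hf : MemFgamma f γ) (z : ℝ) (p : ℝ × ℝ) :
    ‖p.2 * deriv (fun x => f x p.1 p.2) z‖ ≤ |p.2| * γ p.1 p.2 := by
  rw [Real.norm_eq_abs, abs_mul]
  exact mul_le_mul_of_nonneg_left (hf.abs_deriv_le _ _ _) (abs_nonneg _)

theorem aestronglyMeasurable_mul (hf : MemFgamma f γ) (z : ℝ) :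
    AEStronglyMeasurable fun p : ℝ × ℝ => p.2 * f z p.1 p.2 :=
  (measurable_snd.mul (hf.measurable_slice z)).aestronglyMeasurable

theorem aestronglyMeasurable_mul_deriv (hf : MemFgamma f γ) (z : ℝ) :
    AEStronglyMeasurable fun p : ℝ × ℝ => p.2 * deriv (fun x => f x p.1 p.2) z :=
  (measurable_snd.mul (measurable_deriv_of_differentiableAt (fun x => hf.measurable_slice x)
    fun p => (hf.hasDerivAt p.1 p.2 z).differentiableAt)).aestronglyMeasurable

theorem integrable_mul (hf : MemFgamma f γ) (hγ : MemL γ) (z : ℝ) :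
    Integrable fun p : ℝ × ℝ => p.2 * f z p.1 p.2 :=
  hγ.integrable_abs_mul.mono' (hf.aestronglyMeasurable_mul z)
    (Eventually.of_forall (hf.norm_mul_le z))

theorem sigmaF_le_absMoment (hf : MemFgamma f γ) (hγ : MemL γ) (z : ℝ) :
    sigmaF f z ≤ absMoment γ :=
  integral_mono (hf.integrable_mul hγ z) hγ.integrable_abs_mul fun p =>
    (le_abs_self _).trans (hf.norm_mul_le z p)

theorem abs_sigmaDeriv_le_absMoment (hf : MemFgamma f γ) (hγ : MemL γ) (z : ℝ) :
    |sigmaDeriv f z| ≤ absMoment γ :=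
  norm_integral_le_of_norm_le hγ.integrable_abs_mul
    (Eventually.of_forall (hf.norm_mul_deriv_le z))

theorem hasDerivAt_sigmaF (hf : MemFgamma f γ) (hγ : MemL γ) (z : ℝ) :
    HasDerivAt (sigmaF f) (sigmaDeriv f z) z :=
  (hasDerivAt_integral_of_dominated_loc_of_deriv_le
    (F := fun z (p : ℝ × ℝ) => p.2 * f z p.1 p.2) univ_mem
    (Eventually.of_forall hf.aestronglyMeasurable_mul) (hf.integrable_mul hγ z)
    (hf.aestronglyMeasurable_mul_deriv z)
    (Eventually.of_forall fun p x _ => hf.norm_mul_deriv_le x p) hγ.integrable_abs_mul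
    (Eventually.of_forall fun p x _ => (hf.hasDerivAt p.1 p.2 x).const_mul p.2)).2

theorem contDiff_sigmaF (hf : MemFgamma f γ) (hγ : MemL γ) : ContDiff ℝ 1 (sigmaF f) := by
  refine contDiff_one_iff_deriv.mpr ⟨fun z => (hf.hasDerivAt_sigmaF hγ z).differentiableAt, ?_⟩
  rw [funext fun z => (hf.hasDerivAt_sigmaF hγ z).deriv]
  exact continuous_of_dominated hf.aestronglyMeasurable_mul_deriv
    (fun z => Eventually.of_forall (hf.norm_mul_deriv_le z)) hγ.integrable_abs_mul
    (Eventually.of_forall fun p =>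
      continuous_const.mul (contDiff_one_iff_deriv.mp (hf.contDiff p.1 p.2)).2)

end MemFgamma

theorem StrictMono.continuous_invFun {α β : Type*} [LinearOrder α] [TopologicalSpace α]
    [OrderTopology α] [DenselyOrdered α] [Nonempty α] [LinearOrder β] [TopologicalSpace β]
    [OrderTopology β] {D : α → β} (hD : StrictMono D) (hs : Function.Surjective D) :
    Continuous (Function.invFun D) := by
  refine Monotone.continuous_of_surjective (fun a b hab => ?_)
    (Function.leftInverse_invFun hD.injective).surjective
  rwa [← hD.le_iff_le, Function.rightInverse_invFun hs a, Function.rightInverse_invFun hs b]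

section Dilation

variable {f : ℝ → ℝ → ℝ → ℝ}

theorem hasDerivAt_Dfun (hσ : Continuous (sigmaF f)) (q b : ℝ) :
    HasDerivAt (Dfun f q) (1 + sigmaF f b) b :=
  (hasDerivAt_id' b).add (hσ.integral_hasStrictDerivAt q b).hasDerivAt

theorem strictMono_Dfun (hσ : Continuous (sigmaF f)) (hσ0 : ∀ x, 0 ≤ sigmaF f x) (q : ℝ) :
    StrictMono (Dfun f q) :=
  strictMono_of_hasDerivAt_pos (hasDerivAt_Dfun hσ q) fun b => by linarith [hσ0 b]

theorem surjective_Dfun (hσ : Continuous (sigmaF f)) (hσ0 : ∀ x, 0 ≤ sigmaF f x) (q : ℝ) :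
    Function.Surjective (Dfun f q) := by
  have hD : Continuous (Dfun f q) :=
    continuous_iff_continuousAt.mpr fun b => (hasDerivAt_Dfun hσ q b).continuousAt
  refine hD.surjective
    (tendsto_atTop_mono' _ ?_ tendsto_id) (tendsto_atBot_mono' _ ?_ tendsto_id)
  · filter_upwards [eventually_ge_atTop q] with b hb
    have : 0 ≤ ∫ x in q..b, sigmaF f x := intervalIntegral.integral_nonneg hb fun x _ => hσ0 x
    simp only [Dfun, id]
    linarith
  · filter_upwards [eventually_le_atBot q] with b hb
    have : 0 ≤ ∫ x in b..q, sigmaF f x := intervalIntegral.integral_nonneg hb fun x _ => hσ0 x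
    simp only [Dfun, id, intervalIntegral.integral_symm b q]
    linarith

theorem hasDerivAt_invFun_Dfun (hσ : Continuous (sigmaF f)) (hσ0 : ∀ x, 0 ≤ sigmaF f x)
    (q y : ℝ) :
    HasDerivAt (Function.invFun (Dfun f q))
      (1 + sigmaF f (Function.invFun (Dfun f q) y))⁻¹ y :=
  HasDerivAt.of_local_left_inverse
    ((strictMono_Dfun hσ hσ0 q).continuous_invFun (surjective_Dfun hσ hσ0 q)).continuousAt
    (hasDerivAt_Dfun hσ q _) (by linarith [hσ0 (Function.invFun (Dfun f q) y)])
    (Eventually.of_forall (Function.rightInverse_invFun (surjective_Dfun hσ hσ0 q)))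

theorem contDiff_invFun_Dfun (hσ : Continuous (sigmaF f)) (hσ0 : ∀ x, 0 ≤ sigmaF f x)
    (q : ℝ) : ContDiff ℝ 1 (Function.invFun (Dfun f q)) := by
  have hx := hasDerivAt_invFun_Dfun hσ hσ0 q
  refine contDiff_one_iff_deriv.mpr ⟨fun y => (hx y).differentiableAt, ?_⟩
  rw [funext fun y => (hx y).deriv]
  exact (continuous_const.add (hσ.comp
    ((strictMono_Dfun hσ hσ0 q).continuous_invFun (surjective_Dfun hσ hσ0 q)))).inv₀
    fun y => by
      simp only [Pi.add_apply, Function.comp_apply]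
      linarith [hσ0 (Function.invFun (Dfun f q) y)]

end Dilation

theorem sigmaF_Dop (f : ℝ → ℝ → ℝ → ℝ) (q y : ℝ) :
    sigmaF (Dop f q) y =
      sigmaF f (Function.invFun (Dfun f q) y) / (1 + sigmaF f (Function.invFun (Dfun f q) y)) := by
  simp only [sigmaF, Dop, mul_div_assoc']
  exact integral_div _ _

section DilatedDensity

variable {f : ℝ → ℝ → ℝ → ℝ} {γ : ℝ → ℝ → ℝ}

theorem hasDerivAt_Dop (hf : MemFgamma f γ) (hγ : MemL γ) (hσ0 : ∀ x, 0 ≤ sigmaF f x)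
    (q y v r : ℝ) :
    let x := Function.invFun (Dfun f q) y
    HasDerivAt (fun y' => Dop f q y' v r)
      ((deriv (fun x' => f x' v r) x - f x v r * sigmaDeriv f x / (1 + sigmaF f x)) /
        (1 + sigmaF f x) ^ 2) y := by
  intro x
  have hσ := (hf.contDiff_sigmaF hγ).continuous
  have ht : 1 + sigmaF f x ≠ 0 := by linarith [hσ0 x]
  have hx : HasDerivAt (Function.invFun (Dfun f q)) (1 + sigmaF f x)⁻¹ y :=
    hasDerivAt_invFun_Dfun hσ hσ0 q y
  have hnum := (hf.hasDerivAt v r x).comp y hx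
  have hden := ((hf.hasDerivAt_sigmaF hγ x).comp y hx).const_add 1
  refine (hnum.div hden ht).congr_deriv ?_
  simp only [Function.comp_apply, show Function.invFun (Dfun f q) y = x from rfl]
  field_simp

theorem abs_deriv_Dop_le (hf : MemFgamma f γ) (hγ : MemL γ) (hσ0 : ∀ x, 0 ≤ sigmaF f x)
    (q y v r : ℝ) :
    |deriv (fun y' => Dop f q y' v r) y| ≤ (1 + absMoment γ) * γ v r := by
  rw [(hasDerivAt_Dop hf hγ hσ0 q y v r).deriv]
  set x := Function.invFun (Dfun f q) y
  set t := 1 + sigmaF f x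
  have ht : 1 ≤ t := by linarith [hσ0 x]
  have hc0 : 0 ≤ f x v r := hf.nonneg x v r
  calc |(deriv (fun x' => f x' v r) x - f x v r * sigmaDeriv f x / t) / t ^ 2|
      ≤ |deriv (fun x' => f x' v r) x| + f x v r * |sigmaDeriv f x| / t := by
        rw [abs_div, abs_of_pos (by positivity : 0 < t ^ 2)]
        refine (div_le_self (abs_nonneg _) (one_le_pow₀ ht)).trans ((abs_sub _ _).trans ?_)
        rw [abs_div, abs_mul, abs_of_nonneg hc0, abs_of_pos (by positivity : 0 < t)]
    _ ≤ γ v r + γ v r * absMoment γ := by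
        gcongr
        · exact hf.abs_deriv_le x v r
        · exact (div_le_self (by positivity) ht).trans
            (mul_le_mul (hf.le x v r) (hf.abs_sigmaDeriv_le_absMoment hγ x) (abs_nonneg _)
              (hγ.nonneg v r))
    _ = (1 + absMoment γ) * γ v r := by ring

theorem memFgamma_Dop (hf : MemFgamma f γ) (hγ : MemL γ) (hσ0 : ∀ x, 0 ≤ sigmaF f x)
    (q : ℝ) :
    MemFgamma (Dop f q) fun v r => (1 + absMoment γ) * γ v r := by
  have hσ := hf.contDiff_sigmaF hγ
  have hx := contDiff_invFun_Dfun hσ.continuous hσ0 q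
  have ht : ∀ y, 0 < 1 + sigmaF f (Function.invFun (Dfun f q) y) := fun y => by
    linarith [hσ0 (Function.invFun (Dfun f q) y)]
  refine ⟨?_, fun y v r => div_nonneg (hf.nonneg _ v r) (ht y).le, fun v r => ?_,
    fun y v r => ?_, abs_deriv_Dop_le hf hγ hσ0 q⟩
  · exact (hf.1.comp ((hx.continuous.measurable.comp measurable_fst).prodMk measurable_snd)).div
      (((hσ.comp hx).continuous.measurable.comp measurable_fst).const_add 1)
  · exact ((hf.contDiff v r).comp hx).div (contDiff_const.add (hσ.comp hx)) fun y => (ht y).ne'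
  · calc Dop f q y v r ≤ f (Function.invFun (Dfun f q) y) v r :=
          div_le_self (hf.nonneg _ v r) (by linarith [hσ0 (Function.invFun (Dfun f q) y)])
      _ ≤ γ v r := hf.le _ v r
      _ ≤ (1 + absMoment γ) * γ v r :=
          le_mul_of_one_le_left (hγ.nonneg v r) (by linarith [hγ.absMoment_nonneg])

end DilatedDensity

theorem div_one_add_le_div_one_add {s t : ℝ} (hs : 0 ≤ s) (hst : s ≤ t) :
    s / (1 + s) ≤ t / (1 + t) := by
  rw [div_le_div_iff₀ (by linarith) (by linarith)]
  linarith

/-- For `f ∈ 𝓕`, the dilated density `g = 𝒟_q f` has mass function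
`σ_g(y) = σ_f(x)/(1 + σ_f(x))` with `x = D_{f,q}⁻¹(y)`; in particular `‖σ_g‖_∞ < 1`,
i.e. `g ∈ 𝓖`. -/
theorem stmt6 (f : ℝ → ℝ → ℝ → ℝ) (hf : MemF f) (q : ℝ) :
    (∀ y : ℝ, sigmaF (Dop f q) y =
      sigmaF f (Function.invFun (Dfun f q) y) /
        (1 + sigmaF f (Function.invFun (Dfun f q) y))) ∧
    MemG (Dop f q) := by
  obtain ⟨⟨γ, hγ, hfγ⟩, hσ⟩ := hf
  have hσ0 : ∀ x, 0 ≤ sigmaF f x := fun x => (hσ x).le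
  have hK := hγ.absMoment_nonneg
  refine ⟨sigmaF_Dop f q, ⟨⟨_, hγ.const_mul (by linarith), memFgamma_Dop hfγ hγ hσ0 q⟩,
    fun y => ?_⟩, absMoment γ / (1 + absMoment γ), ?_, fun y => ?_⟩
  · rw [sigmaF_Dop]
    exact div_pos (hσ _) (by linarith [hσ (Function.invFun (Dfun f q) y)])
  · rw [div_lt_one (by linarith)]
    linarith
  · rw [sigmaF_Dop]
    exact div_one_add_le_div_one_add (hσ0 _) (hfγ.sigmaF_le_absMoment hγ _)
end

section
/- Flow difference identity: for f ∈ 𝓕 and p, v, w, t ∈ ℝ, j_f(p,v,t) − j_f(p,w,t) = ∫_{p+wt}^{p+vt} σ_{𝒯_t f}(x) dx, where 𝒯_t f(x,v,r) := f(x−vt,v,r) is the free (ideal gas) evolution. -/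
open MeasureTheory Filter Topology

/-!
Write `ρ_f(z,u) = ∫ r f(z,u,r) dr` for the length density of rods of velocity `u` at position `z`.
Reversing the inner interval in `j_f⁻` merges the two halves of the flow into one integral,
`j_f(p,v,t) = ∫_ℝ ∫_p^{p+(v-u)t} ρ_f(z,u) dz du`. For fixed `u` the difference of two such inner
integrals is `∫_{p+(w-u)t}^{p+(v-u)t} ρ_f(z,u) dz = ∫_{p+wt}^{p+vt} ρ_f(x-ut,u) dx`, and after
exchanging the integrals `∫ ρ_f(x-ut,u) du = σ_{𝒯_t f}(x)`. Every interchange is justified by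
`|ρ_f(z,u)| ≤ N(u) := ∫ |r| γ(u,r) dr`: for `γ ∈ 𝓛` both `N` and `u N(u)` are integrable, and the
inner integrals above are bounded by `|v-u| |t| N(u)`.
-/

open Function

noncomputable def lengthDensity (f : ℝ → ℝ → ℝ → ℝ) (z w : ℝ) : ℝ := ∫ r, r * f z w r

noncomputable def lengthBound (γ : ℝ → ℝ → ℝ) (w : ℝ) : ℝ := ∫ r, |r| * γ w r

theorem jflow_eq_integral {f : ℝ → ℝ → ℝ → ℝ} {x v t : ℝ}
    (hint : Integrable fun w => ∫ z in x..(x + (v - w) * t), lengthDensity f z w) :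
    jflow f x v t = ∫ w, ∫ z in x..(x + (v - w) * t), lengthDensity f z w := by
  have hminus : jminus f x v t
      = -∫ w in Set.Ioi v, ∫ z in x..(x + (v - w) * t), lengthDensity f z w := by
    rw [← integral_neg]
    exact setIntegral_congr_fun measurableSet_Ioi fun w _ => intervalIntegral.integral_symm _ _
  rw [jflow, hminus, sub_neg_eq_add, jplus, ← integral_Iic_eq_integral_Iio]
  exact intervalIntegral.integral_Iic_add_Ioi hint.integrableOn hint.integrableOn

theorem intervalIntegral_sub_intervalIntegral_eq_comp_sub {g : ℝ → ℝ}
    (hg : ∀ a b, IntervalIntegrable g volume a b) (p v w u t : ℝ) :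
    (∫ z in p..(p + (v - u) * t), g z) - ∫ z in p..(p + (w - u) * t), g z
      = ∫ x in (p + w * t)..(p + v * t), g (x - u * t) := by
  rw [intervalIntegral.integral_interval_sub_left (hg _ _) (hg _ _),
    intervalIntegral.integral_comp_sub_right]
  congr 1 <;> ring

section Kernel

variable {K : ℝ → ℝ → ℝ} {N : ℝ → ℝ}

theorem stronglyMeasurable_intervalIntegral_of_uncurry (hK : StronglyMeasurable (uncurry K))
    {a b : ℝ → ℝ} (ha : Measurable a) (hb : Measurable b) :
    StronglyMeasurable fun u => ∫ z in a u..b u, K z u := by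
  -- substituting `z = a u + (b u - a u) s` moves the dependence on `u` into the integrand
  have hsubst : ∀ u, (∫ z in a u..b u, K z u)
      = (b u - a u) * ∫ s in Set.Ioc (0 : ℝ) 1, K ((b u - a u) * s + a u) u := by
    intro u
    rw [← intervalIntegral.integral_of_le zero_le_one, ← smul_eq_mul,
      intervalIntegral.smul_integral_comp_mul_add (f := fun z => K z u)]
    simp
  simp_rw [hsubst]
  exact (hb.sub ha).stronglyMeasurable.mul
    (StronglyMeasurable.integral_prod_right'
      (f := fun q : ℝ × ℝ => K ((b q.1 - a q.1) * q.2 + a q.1) q.1)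
      (hK.comp_measurable
        (show Measurable fun q : ℝ × ℝ => ((b q.1 - a q.1) * q.2 + a q.1, q.1) by fun_prop)))

theorem intervalIntegrable_of_norm_le (hK : StronglyMeasurable (uncurry K)) {u : ℝ}
    (hu : ∀ z, ‖K z u‖ ≤ N u) (a b : ℝ) :
    IntervalIntegrable (fun z => K z u) volume a b :=
  intervalIntegrable_const.mono_fun'
    (hK.comp_measurable (measurable_id.prodMk measurable_const)).aestronglyMeasurable
    (ae_of_all _ hu)

theorem integrable_intervalIntegral_of_norm_le (hK : StronglyMeasurable (uncurry K))
    (hKN : ∀ᵐ u, ∀ z, ‖K z u‖ ≤ N u) {a b : ℝ → ℝ} (ha : Measurable a) (hb : Measurable b)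
    (hab : Integrable fun u => (b u - a u) * N u) :
    Integrable fun u => ∫ z in a u..b u, K z u := by
  refine hab.norm.mono'
    (stronglyMeasurable_intervalIntegral_of_uncurry hK ha hb).aestronglyMeasurable ?_
  filter_upwards [hKN] with u hu
  calc ‖∫ z in a u..b u, K z u‖ ≤ N u * |b u - a u| :=
        intervalIntegral.norm_integral_le_of_norm_le_const fun z _ => hu z
    _ ≤ ‖(b u - a u) * N u‖ := by
        rw [norm_mul, Real.norm_eq_abs, Real.norm_eq_abs, mul_comm]
        exact mul_le_mul_of_nonneg_left (le_abs_self _) (abs_nonneg _)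

theorem integrable_intervalIntegral_sub_mul (hK : StronglyMeasurable (uncurry K))
    (hN : Integrable N) (hNu : Integrable fun u => u * N u) (hKN : ∀ᵐ u, ∀ z, ‖K z u‖ ≤ N u)
    (p v t : ℝ) :
    Integrable fun u => ∫ z in p..(p + (v - u) * t), K z u := by
  refine integrable_intervalIntegral_of_norm_le hK hKN measurable_const (by fun_prop) ?_
  have hlin : (fun u => (p + (v - u) * t - p) * N u) = fun u => v * t * N u - t * (u * N u) := by
    ext u; ring
  rw [hlin]
  exact (hN.const_mul _).sub (hNu.const_mul _)

theorem integral_intervalIntegral_comp_sub_mul_swap (hK : StronglyMeasurable (uncurry K))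
    (hN : Integrable N) (hKN : ∀ᵐ u, ∀ z, ‖K z u‖ ≤ N u) (a b t : ℝ) :
    ∫ u, ∫ x in a..b, K (x - u * t) u = ∫ x in a..b, ∫ u, K (x - u * t) u := by
  have : IsFiniteMeasure (volume.restrict (Set.uIoc a b)) :=
    isFiniteMeasure_restrict.mpr measure_Ioc_lt_top.ne
  refine (intervalIntegral_integral_swap ?_).symm
  exact (hN.comp_snd _).mono'
    (hK.comp_measurable
      (show Measurable fun q : ℝ × ℝ => (q.1 - q.2 * t, q.2) by fun_prop)).aestronglyMeasurable
    ((Measure.quasiMeasurePreserving_snd.ae hKN).mono fun q hq => hq _)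

theorem integral_sub_integral_eq_intervalIntegral_integral (hK : StronglyMeasurable (uncurry K))
    (hN : Integrable N) (hNu : Integrable fun u => u * N u) (hKN : ∀ᵐ u, ∀ z, ‖K z u‖ ≤ N u)
    (p v w t : ℝ) :
    (∫ u, ∫ z in p..(p + (v - u) * t), K z u) - ∫ u, ∫ z in p..(p + (w - u) * t), K z u
      = ∫ x in (p + w * t)..(p + v * t), ∫ u, K (x - u * t) u := by
  rw [← integral_sub (integrable_intervalIntegral_sub_mul hK hN hNu hKN p v t)
      (integrable_intervalIntegral_sub_mul hK hN hNu hKN p w t),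
    ← integral_intervalIntegral_comp_sub_mul_swap hK hN hKN]
  refine integral_congr_ae ?_
  filter_upwards [hKN] with u hu
  exact intervalIntegral_sub_intervalIntegral_eq_comp_sub (intervalIntegrable_of_norm_le hK hu) ..

end Kernel

theorem MeasureTheory.Integrable.mul_of_abs_le_abs {α : Type*} [MeasurableSpace α] {μ : Measure α}
    {c w γ : α → ℝ} (hwγ : Integrable (fun q => w q * γ q) μ) (hc : Measurable c)
    (hw : Measurable w) (hw0 : ∀ q, w q ≠ 0) (hcw : ∀ q, |c q| ≤ |w q|) :
    Integrable (fun q => c q * γ q) μ := by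
  refine (hwγ.bdd_mul (c := 1) (hc.div hw).aestronglyMeasurable (ae_of_all _ fun q => ?_)).congr
    (ae_of_all _ fun q => ?_)
  · rw [Pi.div_apply, norm_div, Real.norm_eq_abs, Real.norm_eq_abs,
      div_le_one (abs_pos.mpr (hw0 q))]
    exact hcw q
  · show c q / w q * (w q * γ q) = c q * γ q
    field_simp [hw0 q]

namespace MemL

variable {γ : ℝ → ℝ → ℝ}

theorem integrable_abs_snd_mul (hγ : MemL γ) :
    Integrable fun q : ℝ × ℝ => |q.2| * γ q.1 q.2 :=
  hγ.2.mul_of_abs_le_abs (by fun_prop) (by fun_prop) (fun q => by positivity) fun q => by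
    rw [abs_abs, abs_of_pos (by positivity : (0 : ℝ) < q.1 ^ 2 + q.2 ^ 2 + 1)]
    nlinarith [sq_nonneg (|q.2| - 1), sq_abs q.2, sq_nonneg q.1]

theorem integrable_fst_mul_abs_snd_mul (hγ : MemL γ) :
    Integrable fun q : ℝ × ℝ => q.1 * |q.2| * γ q.1 q.2 :=
  hγ.2.mul_of_abs_le_abs (by fun_prop) (by fun_prop) (fun q => by positivity) fun q => by
    rw [abs_mul, abs_abs, abs_of_pos (by positivity : (0 : ℝ) < q.1 ^ 2 + q.2 ^ 2 + 1)]
    nlinarith [sq_nonneg (|q.1| - |q.2|), sq_abs q.1, sq_abs q.2]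

theorem ae_integrable_abs_mul (hγ : MemL γ) : ∀ᵐ w, Integrable fun r => |r| * γ w r :=
  (Measure.volume_eq_prod ℝ ℝ ▸ hγ.integrable_abs_snd_mul).prod_right_ae

theorem integrable_lengthBound (hγ : MemL γ) : Integrable (lengthBound γ) :=
  (Measure.volume_eq_prod ℝ ℝ ▸ hγ.integrable_abs_snd_mul).integral_prod_left

theorem integrable_mul_lengthBound (hγ : MemL γ) : Integrable fun w => w * lengthBound γ w := by
  have h := (Measure.volume_eq_prod ℝ ℝ ▸ hγ.integrable_fst_mul_abs_snd_mul).integral_prod_left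
  simp_rw [mul_assoc, integral_const_mul] at h
  exact h

end MemL

namespace MemFgamma

variable {f : ℝ → ℝ → ℝ → ℝ} {γ : ℝ → ℝ → ℝ}

theorem abs_mul_le (hf : MemFgamma f γ) (x v r : ℝ) : |r * f x v r| ≤ |r| * γ v r := by
  rw [abs_mul, abs_of_nonneg (hf.2.1 x v r)]
  exact mul_le_mul_of_nonneg_left (hf.2.2.2.1 x v r) (abs_nonneg r)

theorem stronglyMeasurable_lengthDensity (hf : MemFgamma f γ) :
    StronglyMeasurable (uncurry (lengthDensity f)) := by
  have hm : Measurable fun q : (ℝ × ℝ) × ℝ => q.2 * f q.1.1 q.1.2 q.2 :=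
    measurable_snd.mul
      (hf.1.comp (show Measurable fun q : (ℝ × ℝ) × ℝ => (q.1.1, q.1.2, q.2) by fun_prop))
  exact hm.stronglyMeasurable.integral_prod_right'

theorem norm_lengthDensity_le (hf : MemFgamma f γ) {w : ℝ}
    (hw : Integrable fun r => |r| * γ w r) (z : ℝ) :
    ‖lengthDensity f z w‖ ≤ lengthBound γ w :=
  norm_integral_le_of_norm_le hw (ae_of_all _ fun r => hf.abs_mul_le z w r)

theorem integrable_mul_Tfree (hf : MemFgamma f γ) (hγ : MemL γ) (t x : ℝ) :
    Integrable fun q : ℝ × ℝ => q.2 * Tfree t f x q.1 q.2 :=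
  hγ.integrable_abs_snd_mul.mono'
    (measurable_snd.mul (hf.1.comp
      (show Measurable fun q : ℝ × ℝ => (x - q.1 * t, q.1, q.2) by fun_prop))).aestronglyMeasurable
    (ae_of_all _ fun q => hf.abs_mul_le _ _ _)

end MemFgamma

theorem sigmaF_eq_integral_lengthDensity {f : ℝ → ℝ → ℝ → ℝ} {x : ℝ}
    (hf : Integrable fun q : ℝ × ℝ => q.2 * f x q.1 q.2) :
    sigmaF f x = ∫ w, lengthDensity f x w := by
  rw [sigmaF, Measure.volume_eq_prod, integral_prod _ (Measure.volume_eq_prod ℝ ℝ ▸ hf)]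
  rfl

/-- Flow difference identity: for `f ∈ 𝓕`,
`j_f(p,v,t) - j_f(p,w,t) = ∫_{p+wt}^{p+vt} σ_{𝒯_t f}(x) dx`. -/
theorem stmt13 (f : ℝ → ℝ → ℝ → ℝ) (hf : MemF f) (p v w t : ℝ) :
    jflow f p v t - jflow f p w t = ∫ x in (p + w * t)..(p + v * t), sigmaF (Tfree t f) x := by
  obtain ⟨⟨γ, hγ, hfγ⟩, -⟩ := hf
  have hK := hfγ.stronglyMeasurable_lengthDensity
  have hKN : ∀ᵐ u, ∀ z, ‖lengthDensity f z u‖ ≤ lengthBound γ u :=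
    hγ.ae_integrable_abs_mul.mono fun u hu => hfγ.norm_lengthDensity_le hu
  have hflow (v' : ℝ) := integrable_intervalIntegral_sub_mul hK hγ.integrable_lengthBound
    hγ.integrable_mul_lengthBound hKN p v' t
  rw [jflow_eq_integral (hflow v), jflow_eq_integral (hflow w),
    integral_sub_integral_eq_intervalIntegral_integral hK hγ.integrable_lengthBound
      hγ.integrable_mul_lengthBound hKN]
  refine intervalIntegral.integral_congr fun x _ => ?_
  exact (sigmaF_eq_integral_lengthDensity (hfγ.integrable_mul_Tfree hγ t x)).symm
end

section
/- Quasiparticle position formula: for g ∈ 𝓖, the position u_{g,v,t}(q) := q + vt + j_{𝒞_q g}(q,v,t) satisfies, for any reference point (p,w), u_{g,v,t}(q) = C_{g,p}(q) + vt + j_{𝒞_p g}(p,w,t) + ∫_{p+wt}^{C_{g,p}(q)+vt} σ_{𝒯_t 𝒞_p g}(x) dx. -/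
/-!
Moving the base point of the contraction only translates the contracted density,
`𝒞_q g = S_{q - C_{g,p}(q)} 𝒞_p g`, so `j_{𝒞_q g}(q,v,t) = j_{𝒞_p g}(C_{g,p}(q),v,t)`.
For any density `f` with a second moment in `(v, r)`, write the flow as
`j_f(x,v,t) = ∫_w ∫_x^{x+(v-w)t} (∫ r f) dz dw` and rearrange the inner intervals:
`j_f(b,v,t) - j_f(a,u,t) = ∫_w ∫_{a+(u-w)t}^{b+(v-w)t} - ∫_w ∫_a^b`. After the shift
`z = x - wt` and Fubini the two terms are `∫_{a+ut}^{b+vt} σ_{𝒯_t f}` and `∫_a^b σ_f`.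
Finally `∫_p^{C_{g,p}(q)} σ_{𝒞_p g} = ∫_p^q σ_g = q - C_{g,p}(q)` by the substitution
`x = C_{g,p}(y)`.
-/

open MeasureTheory Filter Topology

lemma one_add_abs_mul_abs_le (w r : ℝ) : (1 + |w|) * |r| ≤ w ^ 2 + r ^ 2 + 1 := by
  nlinarith [sq_nonneg (|w| - |r|), sq_nonneg (|r| - 1), sq_abs r, sq_abs w, abs_nonneg w,
    abs_nonneg r]

lemma measurable_intervalIntegral_comp {K : ℝ × ℝ → ℝ} (hK : Measurable K) {e₁ e₂ : ℝ → ℝ}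
    (he₁ : Measurable e₁) (he₂ : Measurable e₂) :
    Measurable fun w => ∫ z in e₁ w..e₂ w, K (w, z) := by
  have hIoc : ∀ u₁ u₂ : ℝ → ℝ, Measurable u₁ → Measurable u₂ →
      Measurable fun w => ∫ z in Set.Ioc (u₁ w) (u₂ w), K (w, z) := by
    intro u₁ u₂ hu₁ hu₂
    have hS : MeasurableSet {p : ℝ × ℝ | p.2 ∈ Set.Ioc (u₁ p.1) (u₂ p.1)} :=
      (measurableSet_lt (hu₁.comp measurable_fst) measurable_snd).inter
        (measurableSet_le measurable_snd (hu₂.comp measurable_fst))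
    simp_rw [← integral_indicator measurableSet_Ioc]
    exact ((hK.indicator hS).stronglyMeasurable.integral_prod_right').measurable
  exact (hIoc e₁ e₂ he₁ he₂).sub (hIoc e₂ e₁ he₂ he₁)

lemma integral_intervalIntegral_swap_of_abs_le {L : ℝ × ℝ → ℝ} (hL : Measurable L) {B : ℝ → ℝ}
    (hB : Integrable B) (hLB : ∀ᵐ w, ∀ z, |L (w, z)| ≤ B w) (a b : ℝ) :
    ∫ w, ∫ z in a..b, L (w, z) = ∫ z in a..b, ∫ w, L (w, z) := by
  have : IsFiniteMeasure (volume.restrict (Set.uIoc a b)) :=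
    isFiniteMeasure_restrict.2 measure_Ioc_lt_top.ne
  refine (intervalIntegral_integral_swap ?_).symm
  have hBprod : Integrable (fun p : ℝ × ℝ => 1 * B p.2)
      ((volume.restrict (Set.uIoc a b)).prod volume) :=
    (integrable_const 1).mul_prod hB
  refine hBprod.mono' (hL.comp measurable_swap).aestronglyMeasurable ?_
  filter_upwards [Measure.quasiMeasurePreserving_snd.ae hLB] with p hp
  simpa [Function.uncurry] using hp p.1

lemma jflow_Sop (s : ℝ) (h : ℝ → ℝ → ℝ → ℝ) (x v t : ℝ) :
    jflow (Sop s h) x v t = jflow h (x - s) v t := by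
  have hshift (w a b : ℝ) : ∫ z in a..b, ∫ r, r * Sop s h z w r =
      ∫ z in a - s..b - s, ∫ r, r * h z w r :=
    intervalIntegral.integral_comp_sub_right (fun z => ∫ r, r * h z w r) s
  simp only [jflow, jplus, jminus, hshift, sub_add_eq_add_sub]

structure IsDominatedBy (f : ℝ → ℝ → ℝ → ℝ) (γ : ℝ → ℝ → ℝ) : Prop where
  measurable : Measurable fun p : ℝ × ℝ × ℝ => f p.1 p.2.1 p.2.2
  abs_le : ∀ x v r, |f x v r| ≤ γ v r
  integrable_moment : Integrable fun p : ℝ × ℝ => (p.1 ^ 2 + p.2 ^ 2 + 1) * γ p.1 p.2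

/-- The argument is (velocity, position), the order of integration in `j_f`. -/
noncomputable def massDensity (f : ℝ → ℝ → ℝ → ℝ) (p : ℝ × ℝ) : ℝ := ∫ r, r * f p.2 p.1 r

noncomputable def lengthMoment (γ : ℝ → ℝ → ℝ) (w : ℝ) : ℝ := ∫ r, |r| * γ w r

namespace IsDominatedBy

variable {f : ℝ → ℝ → ℝ → ℝ} {γ : ℝ → ℝ → ℝ} (hf : IsDominatedBy f γ)
include hf

lemma nonneg (v r : ℝ) : 0 ≤ γ v r := (abs_nonneg _).trans (hf.abs_le 0 v r)

lemma tfree (t : ℝ) : IsDominatedBy (Tfree t f) γ where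
  measurable := hf.measurable.comp
    ((measurable_fst.sub (measurable_snd.fst.mul measurable_const)).prodMk measurable_snd)
  abs_le _ v r := hf.abs_le _ v r
  integrable_moment := hf.integrable_moment

lemma integrable_one_add_abs_mul :
    Integrable fun p : ℝ × ℝ => (1 + |p.1|) * |p.2| * γ p.1 p.2 := by
  have hweight : Continuous fun p : ℝ × ℝ => (1 + |p.1|) * |p.2| / (p.1 ^ 2 + p.2 ^ 2 + 1) :=
    .div (by fun_prop) (by fun_prop) fun p => by positivity
  refine hf.integrable_moment.mono' ?_ (Eventually.of_forall fun p => ?_)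
  · refine (hweight.aestronglyMeasurable.mul hf.integrable_moment.aestronglyMeasurable).congr
      (Eventually.of_forall fun p => ?_)
    have : p.1 ^ 2 + p.2 ^ 2 + 1 ≠ 0 := by positivity
    simp only [Pi.mul_apply]
    field_simp
  · rw [Real.norm_of_nonneg (by have := hf.nonneg p.1 p.2; positivity)]
    exact mul_le_mul_of_nonneg_right (one_add_abs_mul_abs_le _ _) (hf.nonneg _ _)

lemma abs_mul_le (x v r : ℝ) : |r * f x v r| ≤ (1 + |v|) * |r| * γ v r := by
  rw [abs_mul, mul_assoc]
  calc |r| * |f x v r| ≤ |r| * γ v r := by gcongr; exact hf.abs_le x v r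
    _ ≤ (1 + |v|) * (|r| * γ v r) :=
      le_mul_of_one_le_left (mul_nonneg (abs_nonneg r) (hf.nonneg v r)) (by simp)

lemma measurable_mul_apply (x : ℝ) : Measurable fun p : ℝ × ℝ => p.2 * f x p.1 p.2 :=
  measurable_snd.mul (hf.measurable.comp (measurable_const.prodMk measurable_id))

lemma continuous_sigmaF (hcont : ∀ v r, Continuous fun x => f x v r) :
    Continuous (sigmaF f) :=
  continuous_of_dominated (fun x => (hf.measurable_mul_apply x).aestronglyMeasurable)
    (fun x => Eventually.of_forall fun p => hf.abs_mul_le x p.1 p.2)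
    hf.integrable_one_add_abs_mul
    (Eventually.of_forall fun p => continuous_const.mul (hcont p.1 p.2))

lemma integrable_one_add_abs_mul_lengthMoment :
    Integrable fun w => (1 + |w|) * lengthMoment γ w := by
  have h := hf.integrable_one_add_abs_mul.integral_prod_left
  refine h.congr (Eventually.of_forall fun w => ?_)
  simp only [lengthMoment, ← integral_const_mul, mul_assoc]

lemma measurable_massDensity : Measurable (massDensity f) :=
  (measurable_snd.mul (hf.measurable.comp (measurable_fst.snd.prodMk
    (measurable_fst.fst.prodMk measurable_snd)))).stronglyMeasurable.integral_prod_right'.measurable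

lemma ae_abs_massDensity_le : ∀ᵐ w, ∀ z, |massDensity f (w, z)| ≤ lengthMoment γ w := by
  have h := hf.integrable_one_add_abs_mul
  rw [Measure.volume_eq_prod] at h
  filter_upwards [h.prod_right_ae] with w hw z
  have hw' : Integrable fun r => |r| * γ w r := by
    refine (hw.const_mul (1 + |w|)⁻¹).congr (Eventually.of_forall fun r => ?_)
    have : 1 + |w| ≠ 0 := by positivity
    field_simp
  calc |massDensity f (w, z)| ≤ ∫ r, |r * f z w r| := abs_integral_le_integral_abs
    _ ≤ lengthMoment γ w := by
      refine integral_mono_of_nonneg (Eventually.of_forall fun r => abs_nonneg _) hw'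
        (Eventually.of_forall fun r => ?_)
      simp only [abs_mul]
      exact mul_le_mul_of_nonneg_left (hf.abs_le z w r) (abs_nonneg r)

lemma sigmaF_eq_integral_massDensity (z : ℝ) : sigmaF f z = ∫ w, massDensity f (w, z) := by
  have h : Integrable fun p : ℝ × ℝ => p.2 * f z p.1 p.2 :=
    hf.integrable_one_add_abs_mul.mono' (hf.measurable_mul_apply z).aestronglyMeasurable
      (Eventually.of_forall fun p => hf.abs_mul_le z p.1 p.2)
  rw [Measure.volume_eq_prod] at h
  rw [sigmaF, Measure.volume_eq_prod, integral_prod _ h]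
  rfl

lemma integral_intervalIntegral_massDensity (a b : ℝ) :
    ∫ w, ∫ z in a..b, massDensity f (w, z) = ∫ z in a..b, sigmaF f z := by
  rw [integral_intervalIntegral_swap_of_abs_le hf.measurable_massDensity
    hf.integrable_one_add_abs_mul_lengthMoment _ a b]
  · simp only [hf.sigmaF_eq_integral_massDensity]
  · filter_upwards [hf.ae_abs_massDensity_le] with w hw z
    have : 0 ≤ lengthMoment γ w := (abs_nonneg _).trans (hw 0)
    nlinarith [hw z, abs_nonneg w]

/-- Interval lengths growing linearly in `w` are paid for by the `w²` moment of `γ`. -/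
lemma integrable_intervalIntegral_massDensity {e₁ e₂ : ℝ → ℝ} (he₁ : Measurable e₁)
    (he₂ : Measurable e₂) (α β : ℝ) (hlen : ∀ w, e₂ w - e₁ w = α + β * w) :
    Integrable fun w => ∫ z in e₁ w..e₂ w, massDensity f (w, z) := by
  refine (hf.integrable_one_add_abs_mul_lengthMoment.const_mul (|α| + |β|)).mono'
    (measurable_intervalIntegral_comp hf.measurable_massDensity he₁ he₂).aestronglyMeasurable ?_
  filter_upwards [hf.ae_abs_massDensity_le] with w hw
  have hm : 0 ≤ lengthMoment γ w := (abs_nonneg _).trans (hw 0)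
  have hlen' : |e₂ w - e₁ w| ≤ (|α| + |β|) * (1 + |w|) := by
    rw [hlen]
    calc |α + β * w| ≤ |α| + |β| * |w| := by rw [← abs_mul]; exact abs_add_le _ _
      _ ≤ (|α| + |β|) * (1 + |w|) := by nlinarith [abs_nonneg α, abs_nonneg β, abs_nonneg w]
  calc ‖∫ z in e₁ w..e₂ w, massDensity f (w, z)‖ ≤ lengthMoment γ w * |e₂ w - e₁ w| :=
        intervalIntegral.norm_integral_le_of_norm_le_const fun z _ => hw z
    _ ≤ lengthMoment γ w * ((|α| + |β|) * (1 + |w|)) := by gcongr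
    _ = (|α| + |β|) * ((1 + |w|) * lengthMoment γ w) := by ring

lemma jflow_eq_integral (x v t : ℝ) :
    jflow f x v t = ∫ w, ∫ z in x..x + (v - w) * t, massDensity f (w, z) := by
  have h := hf.integrable_intervalIntegral_massDensity (e₁ := fun _ => x)
    (e₂ := fun w => x + (v - w) * t) measurable_const (by fun_prop) (v * t) (-t) fun w => by ring
  have hminus : jminus f x v t = -∫ w in Set.Ioi v, ∫ z in x..x + (v - w) * t,
      massDensity f (w, z) := by
    rw [jminus, ← integral_neg]
    exact setIntegral_congr_fun measurableSet_Ioi fun w _ => intervalIntegral.integral_symm _ _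
  rw [jflow, jplus, hminus, sub_neg_eq_add, setIntegral_congr_set Iio_ae_eq_Iic]
  exact intervalIntegral.integral_Iic_add_Ioi h.integrableOn h.integrableOn

lemma ae_intervalIntegrable_massDensity :
    ∀ᵐ w, ∀ a b, IntervalIntegrable (fun z => massDensity f (w, z)) volume a b := by
  filter_upwards [hf.ae_abs_massDensity_le] with w hw a b
  exact intervalIntegrable_const.mono_fun'
    (hf.measurable_massDensity.comp measurable_prodMk_left).aestronglyMeasurable
    (Eventually.of_forall hw)

theorem jflow_sub_jflow (t a b u v : ℝ) :
    jflow f b v t - jflow f a u t =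
      (∫ x in (a + u * t)..(b + v * t), sigmaF (Tfree t f) x) - ∫ x in a..b, sigmaF f x := by
  have hint {e₁ e₂ : ℝ → ℝ} (he₁ : Measurable e₁) (he₂ : Measurable e₂) (α β : ℝ)
      (hlen : ∀ w, e₂ w - e₁ w = α + β * w) :=
    hf.integrable_intervalIntegral_massDensity he₁ he₂ α β hlen
  have hsplit : (fun w => (∫ z in b..b + (v - w) * t, massDensity f (w, z)) -
        ∫ z in a..a + (u - w) * t, massDensity f (w, z)) =ᵐ[volume]
      fun w => (∫ z in a + (u - w) * t..b + (v - w) * t, massDensity f (w, z)) -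
        ∫ z in a..b, massDensity f (w, z) := by
    filter_upwards [hf.ae_intervalIntegrable_massDensity] with w hw
    have h₁ := intervalIntegral.integral_add_adjacent_intervals (hw a b) (hw b (b + (v - w) * t))
    have h₂ := intervalIntegral.integral_add_adjacent_intervals (hw a (a + (u - w) * t))
      (hw (a + (u - w) * t) (b + (v - w) * t))
    linarith
  have htransport : ∀ w, ∫ z in a + (u - w) * t..b + (v - w) * t, massDensity f (w, z) =
      ∫ x in a + u * t..b + v * t, massDensity (Tfree t f) (w, x) := fun w => by
    rw [show a + (u - w) * t = a + u * t - w * t by ring,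
      show b + (v - w) * t = b + v * t - w * t by ring]
    exact (intervalIntegral.integral_comp_sub_right (fun z => massDensity f (w, z)) _).symm
  rw [hf.jflow_eq_integral, hf.jflow_eq_integral,
    ← integral_sub (hint measurable_const (by fun_prop) (v * t) (-t) fun w => by ring)
      (hint measurable_const (by fun_prop) (u * t) (-t) fun w => by ring),
    integral_congr_ae hsplit,
    integral_sub (hint (by fun_prop) (by fun_prop) (b - a + (v - u) * t) 0 fun w => by ring)
      (hint measurable_const measurable_const (b - a) 0 fun w => by ring),
    hf.integral_intervalIntegral_massDensity, ← (hf.tfree t).integral_intervalIntegral_massDensity]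
  simp only [htransport]

end IsDominatedBy

lemma MemFgamma.isDominatedBy {g : ℝ → ℝ → ℝ → ℝ} {γ : ℝ → ℝ → ℝ} (hg : MemFgamma g γ)
    (hγ : MemL γ) : IsDominatedBy g γ where
  measurable := hg.1
  abs_le x v r := (abs_of_nonneg (hg.2.1 x v r)).trans_le (hg.2.2.2.1 x v r)
  integrable_moment := hγ.2

section Contraction

variable {g : ℝ → ℝ → ℝ → ℝ}

lemma Cfun_self (p : ℝ) : Cfun g p p = p := by simp [Cfun]

lemma sigmaF_Cop (p x : ℝ) :
    sigmaF (Cop g p) x = sigmaF g (Function.invFun (Cfun g p) x) /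
      (1 - sigmaF g (Function.invFun (Cfun g p) x)) := by
  simp only [sigmaF, Cop, mul_div_assoc', integral_div]

variable (hσ : Continuous (sigmaF g))
include hσ

lemma hasDerivAt_Cfun (p b : ℝ) : HasDerivAt (Cfun g p) (1 - sigmaF g b) b :=
  (hasDerivAt_id b).sub <| intervalIntegral.integral_hasDerivAt_right
    (hσ.intervalIntegrable (μ := volume) p b) (hσ.stronglyMeasurableAtFilter volume (𝓝 b))
    hσ.continuousAt

lemma Cfun_eq_Cfun_add (p q x : ℝ) : Cfun g q x = Cfun g p x + (q - Cfun g p q) := by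
  have h := intervalIntegral.integral_add_adjacent_intervals
    (hσ.intervalIntegrable (μ := volume) p q) (hσ.intervalIntegrable q x)
  simp only [Cfun]
  linarith

variable {c : ℝ} (hσc : ∀ x, sigmaF g x ≤ c)
include hσc

lemma one_sub_mul_le_Cfun_sub_Cfun (p : ℝ) {a b : ℝ} (hab : a ≤ b) :
    (1 - c) * (b - a) ≤ Cfun g p b - Cfun g p a := by
  have hadd := intervalIntegral.integral_add_adjacent_intervals
    (hσ.intervalIntegrable (μ := volume) p a) (hσ.intervalIntegrable a b)
  have hle : ∫ x in a..b, sigmaF g x ≤ c * (b - a) := by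
    simpa [mul_comm] using intervalIntegral.integral_mono_on hab
      (hσ.intervalIntegrable (μ := volume) a b)
        intervalIntegrable_const fun x _ => hσc x
  simp only [Cfun]
  linarith

variable (hc : c < 1)
include hc

lemma Cfun_strictMono (p : ℝ) : StrictMono (Cfun g p) :=
  strictMono_of_deriv_pos fun b => by
    rw [(hasDerivAt_Cfun hσ p b).deriv]
    linarith [hσc b]

lemma Cfun_surjective (p : ℝ) : Function.Surjective (Cfun g p) := by
  have hcont : Continuous (Cfun g p) :=
    continuous_iff_continuousAt.2 fun b => (hasDerivAt_Cfun hσ p b).continuousAt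
  have hc' : 0 < 1 - c := by linarith
  refine hcont.surjective (tendsto_atTop_mono' _ ?_ (tendsto_atTop_add_const_left _ p
      ((tendsto_atTop_add_const_right _ (-p) tendsto_id).const_mul_atTop hc')))
    (tendsto_atBot_mono' _ ?_ (tendsto_atBot_add_const_left _ p
      ((tendsto_atBot_add_const_right _ (-p) tendsto_id).const_mul_atBot hc')))
  · filter_upwards [eventually_ge_atTop p] with b hb
    simp only [id]
    linarith [one_sub_mul_le_Cfun_sub_Cfun hσ hσc p hb, Cfun_self (g := g) p]
  · filter_upwards [eventually_le_atBot p] with b hb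
    simp only [id]
    linarith [one_sub_mul_le_Cfun_sub_Cfun hσ hσc p hb, Cfun_self (g := g) p]

lemma Cfun_invFun (p y : ℝ) : Cfun g p (Function.invFun (Cfun g p) y) = y :=
  Function.invFun_eq (Cfun_surjective hσ hσc hc p y)

lemma invFun_Cfun (p x : ℝ) : Function.invFun (Cfun g p) (Cfun g p x) = x :=
  Function.leftInverse_invFun (Cfun_strictMono hσ hσc hc p).injective x

lemma continuous_invFun_Cfun (p : ℝ) : Continuous (Function.invFun (Cfun g p)) := by
  let e := StrictMono.orderIsoOfSurjective _ (Cfun_strictMono hσ hσc hc p)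
    (Cfun_surjective hσ hσc hc p)
  have he : Function.invFun (Cfun g p) = e.symm := funext fun y =>
    (Cfun_strictMono hσ hσc hc p).injective <| by
      rw [Cfun_invFun hσ hσc hc]
      exact (e.apply_symm_apply y).symm
  exact he ▸ e.symm.continuous

lemma Cop_eq_Sop (p q : ℝ) : Cop g q = Sop (q - Cfun g p q) (Cop g p) := by
  have hinv (x : ℝ) : Function.invFun (Cfun g q) x =
      Function.invFun (Cfun g p) (x - (q - Cfun g p q)) := by
    set y := Function.invFun (Cfun g p) (x - (q - Cfun g p q))
    have hy : Cfun g q y = x := by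
      rw [Cfun_eq_Cfun_add hσ p q, Cfun_invFun hσ hσc hc]
      ring
    calc Function.invFun (Cfun g q) x = Function.invFun (Cfun g q) (Cfun g q y) := by rw [hy]
      _ = y := invFun_Cfun hσ hσc hc q y
  funext x v r
  simp only [Cop, Sop, hinv]

lemma continuous_sigmaF_Cop (p : ℝ) : Continuous (sigmaF (Cop g p)) := by
  have hinv := continuous_invFun_Cfun hσ hσc hc p
  simp only [funext (sigmaF_Cop (g := g) p)]
  exact (hσ.comp hinv).div (continuous_const.sub (hσ.comp hinv))
    fun x => by linarith [hσc (Function.invFun (Cfun g p) x)]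

/-- Substituting `x = C_{g,p}(y)`, the Jacobian `1 - σ_g(y)` cancels the denominator of
`𝒞_p g`. -/
lemma integral_sigmaF_Cop (p q : ℝ) :
    ∫ x in p..Cfun g p q, sigmaF (Cop g p) x = ∫ y in p..q, sigmaF g y := by
  have h := intervalIntegral.integral_comp_mul_deriv (a := p) (b := q)
    (fun y _ => hasDerivAt_Cfun hσ p y)
    (continuous_const.sub hσ).continuousOn (continuous_sigmaF_Cop hσ hσc hc p)
  rw [Cfun_self] at h
  rw [← h]
  refine intervalIntegral.integral_congr fun y _ => ?_
  have hy : 1 - sigmaF g y ≠ 0 := by linarith [hσc y]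
  simp only [Function.comp_apply, sigmaF_Cop, invFun_Cfun hσ hσc hc]
  field_simp

lemma isDominatedBy_Cop {γ : ℝ → ℝ → ℝ} (hg : IsDominatedBy g γ) (p : ℝ) :
    IsDominatedBy (Cop g p) fun v r => γ v r / (1 - c) where
  measurable := by
    have hinv : Measurable fun x : ℝ × ℝ × ℝ => Function.invFun (Cfun g p) x.1 :=
      (continuous_invFun_Cfun hσ hσc hc p).measurable.comp measurable_fst
    exact (hg.measurable.comp (hinv.prodMk measurable_snd)).div
      ((continuous_const.sub hσ).measurable.comp hinv)
  abs_le x v r := by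
    have hden : 1 - c ≤ 1 - sigmaF g (Function.invFun (Cfun g p) x) := by
      linarith [hσc (Function.invFun (Cfun g p) x)]
    have hc' : 0 < 1 - c := by linarith
    rw [Cop, abs_div, abs_of_pos (hc'.trans_le hden)]
    exact div_le_div₀ (hg.nonneg v r) (hg.abs_le _ _ _) hc' hden
  integrable_moment := by
    simpa only [mul_div_assoc'] using hg.integrable_moment.div_const (1 - c)

end Contraction

/-- Quasiparticle position formula: for `g ∈ 𝓖` and any reference point `(p, w)`,
`u_{g,v,t}(q) = C_{g,p}(q) + v t + j_{𝒞_p g}(p,w,t) + ∫_{p+wt}^{C_{g,p}(q)+vt} σ_{𝒯_t 𝒞_p g}`. -/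
theorem stmt14 (g : ℝ → ℝ → ℝ → ℝ) (hg : MemG g) (v t q p w : ℝ) :
    uqp g v t q =
      Cfun g p q + v * t + jflow (Cop g p) p w t +
        ∫ x in (p + w * t)..(Cfun g p q + v * t), sigmaF (Tfree t (Cop g p)) x := by
  obtain ⟨⟨⟨γ, hγ, hgγ⟩, -⟩, c, hc, hσc⟩ := hg
  have hdom := hgγ.isDominatedBy hγ
  have hσ := hdom.continuous_sigmaF fun v r => (hgγ.2.2.1 v r).continuous
  have hflow := (isDominatedBy_Cop hσ hσc hc hdom p).jflow_sub_jflow t p (Cfun g p q) w v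
  have hmass := integral_sigmaF_Cop hσ hσc hc p q
  rw [uqp, Cop_eq_Sop hσ hσc hc p q, jflow_Sop, sub_sub_cancel]
  have hC : Cfun g p q = q - ∫ y in p..q, sigmaF g y := rfl
  linarith
end
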